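/- Let F be a finite set of reduction operators relative to (G,<) and let C be a set of reduction operators relative to (G,<). Then F ∪ C is a completion of F (i.e. F ∪ C is confluent and ∧(F ∪ C) = ∧F) if and only if obs(F) ⊆ ∪_{T∈C} Red(T) and ∧F ⪯ ∧C. -/

import Mathlib

/-!
A reduction operator is determined by its kernel, and enlarging the kernel can only shrink the set
of normal forms. Hence `∧(F ∪ C) = ∧F` exactly when `ker ∧C ⊆ ker ∧F`, and since
`NF(∧(F ∪ C)) ⊆ NF(F) ∩ NF(C)` always holds, confluence of `F ∪ C` then says precisely that
every obstruction of `F` is reduced by some element of `C`.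
-/

open Finsupp

variable {K G : Type*} [Field K] [LinearOrder G] [WellFoundedLT G]

/-- `T` is a reduction operator relative to `(G, <)`. -/
def IsRedOp (T : (G →₀ K) →ₗ[K] (G →₀ K)) : Prop :=
  T ∘ₗ T = T ∧
    ∀ g : G, T (single g 1) = single g 1 ∨ (T (single g 1)).support.max < (g : WithBot G)

/-- The set of `T`-normal forms. -/
def NFset (T : (G →₀ K) →ₗ[K] (G →₀ K)) : Set G :=
  {g | T (single g 1) = single g 1}

lemma Set.inter_eq_iff_diff_subset_compl {α : Type*} {A B W : Set α} (hW : W ⊆ A ∩ B) :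
    A ∩ B = W ↔ A \ W ⊆ Bᶜ := by
  constructor
  · rintro rfl g ⟨hA, hg⟩ hB
    exact hg ⟨hA, hB⟩
  · intro h
    refine Set.Subset.antisymm (fun g ⟨hA, hB⟩ => ?_) hW
    by_contra hg
    exact h ⟨hA, hg⟩ hB

lemma Finsupp.linearMap_apply_eq_sum {ι R M : Type*} [CommSemiring R] [AddCommMonoid M]
    [Module R M] (T : (ι →₀ R) →ₗ[R] M) (v : ι →₀ R) :
    T v = ∑ i ∈ v.support, v i • T (single i 1) := by
  conv_lhs => rw [← Finsupp.sum_single v]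
  rw [Finsupp.sum, map_sum]
  refine Finset.sum_congr rfl fun i _ => ?_
  rw [← map_smul, Finsupp.smul_single, smul_eq_mul, mul_one]

namespace IsRedOp

variable {T T₁ T₂ : (G →₀ K) →ₗ[K] (G →₀ K)}

section

omit [WellFoundedLT G]

lemma apply_apply (hT : IsRedOp T) (v : G →₀ K) : T (T v) = T v :=
  LinearMap.congr_fun hT.1 v

lemma sub_apply_mem_ker (hT : IsRedOp T) (v : G →₀ K) : v - T v ∈ LinearMap.ker T := by
  rw [LinearMap.mem_ker, map_sub, hT.apply_apply, sub_self]

lemma support_max_apply_single_le (hT : IsRedOp T) (g : G) :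
    (T (single g 1)).support.max ≤ (g : WithBot G) := by
  rcases hT.2 g with h | h
  · rw [h, Finsupp.support_single g one_ne_zero, Finset.max_singleton]
  · exact h.le

lemma support_max_apply_le (hT : IsRedOp T) (v : G →₀ K) :
    (T v).support.max ≤ v.support.max := by
  classical
  rw [Finsupp.linearMap_apply_eq_sum]
  refine Finset.max_le fun a ha => ?_
  obtain ⟨h, hh, hha⟩ := Finset.mem_biUnion.mp (Finsupp.support_finsetSum ha)
  calc (a : WithBot G) ≤ (T (single h 1)).support.max :=
        Finset.le_max (Finsupp.support_smul hha)
    _ ≤ (h : WithBot G) := hT.support_max_apply_single_le h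
    _ ≤ v.support.max := Finset.le_max hh

lemma NFset_subset_of_ker_le (h₁ : IsRedOp T₁) (h₂ : IsRedOp T₂)
    (hker : LinearMap.ker T₁ ≤ LinearMap.ker T₂) : NFset T₂ ⊆ NFset T₁ := by
  intro g hg
  by_contra hng
  have hlt : (T₁ (single g 1)).support.max < (g : WithBot G) := (h₁.2 g).resolve_left hng
  have hT₂ : T₂ (single g 1) = T₂ (T₁ (single g 1)) := by
    simpa [LinearMap.mem_ker, sub_eq_zero] using hker (h₁.sub_apply_mem_ker (single g 1))
  have : (T₂ (single g 1)).support.max < (g : WithBot G) :=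
    (hT₂ ▸ h₂.support_max_apply_le (T₁ (single g 1))).trans_lt hlt
  rw [hg, Finsupp.support_single g one_ne_zero, Finset.max_singleton] at this
  exact lt_irrefl _ this

end

/-- By well-founded induction on `g`: when `g` is not a normal form, `T₁` and `T₂` both send
`g` to the image of `T₁ g`, which only involves basis vectors smaller than `g`. -/
lemma ext_of_ker_eq (h₁ : IsRedOp T₁) (h₂ : IsRedOp T₂)
    (hker : LinearMap.ker T₁ = LinearMap.ker T₂) : T₁ = T₂ := by
  have key : ∀ g : G, T₁ (single g 1) = T₂ (single g 1) := by
    intro g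
    induction g using WellFoundedLT.induction with
    | _ g IH =>
      rcases h₁.2 g with hfix | hlt
      · have hg₂ : g ∈ NFset T₂ := h₂.NFset_subset_of_ker_le h₁ hker.ge hfix
        rw [hfix, hg₂]
      · set w := T₁ (single g 1)
        have hw : T₂ w = T₁ w := by
          rw [Finsupp.linearMap_apply_eq_sum T₁, Finsupp.linearMap_apply_eq_sum T₂]
          refine Finset.sum_congr rfl fun h hh => ?_
          rw [IH h (WithBot.coe_lt_coe.mp ((Finset.le_max hh).trans_lt hlt))]
        have hg : T₂ (single g 1) = T₂ w := by
          have := h₁.sub_apply_mem_ker (single g 1)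
          rwa [hker, LinearMap.mem_ker, map_sub, sub_eq_zero] at this
        rw [hg, hw, h₁.apply_apply]
  refine Finsupp.lhom_ext fun a b => ?_
  rw [← mul_one b, ← Finsupp.smul_single', map_smul, map_smul, key a]

end IsRedOp

theorem completion_characterisation_general (n : ℕ)
    (T : Fin n → (G →₀ K) →ₗ[K] (G →₀ K)) (hT : ∀ i, IsRedOp (T i))
    (C : Set ((G →₀ K) →ₗ[K] (G →₀ K))) (hC : ∀ S ∈ C, IsRedOp S)
    (WF WC WFC : (G →₀ K) →ₗ[K] (G →₀ K))
    (hWF : IsRedOp WF) (hWFC : IsRedOp WFC)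
    (hWFker : LinearMap.ker WF = ⨆ i, LinearMap.ker (T i))
    (hWCker : LinearMap.ker WC = ⨆ S ∈ C, LinearMap.ker S)
    (hWFCker : LinearMap.ker WFC =
      (⨆ i, LinearMap.ker (T i)) ⊔ ⨆ S ∈ C, LinearMap.ker S) :
    (((⋂ i, NFset (T i)) ∩ ⋂ S ∈ C, NFset S) = NFset WFC ∧ WFC = WF) ↔
      ((⋂ i, NFset (T i)) \ NFset WF ⊆ ⋃ S ∈ C, (NFset S)ᶜ ∧
        LinearMap.ker WC ≤ LinearMap.ker WF) := by
  have hNF : NFset WFC ⊆ (⋂ i, NFset (T i)) ∩ ⋂ S ∈ C, NFset S := fun g hg =>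
    ⟨Set.mem_iInter.2 fun i => (hT i).NFset_subset_of_ker_le hWFC
        (hWFCker ▸ le_sup_of_le_left (le_iSup (fun i => LinearMap.ker (T i)) i)) hg,
      Set.mem_iInter₂.2 fun S hS => (hC S hS).NFset_subset_of_ker_le hWFC
        (hWFCker ▸ le_sup_of_le_right (le_iSup₂ (f := fun S _ => LinearMap.ker S) S hS)) hg⟩
  have hW : WFC = WF ↔ LinearMap.ker WC ≤ LinearMap.ker WF := by
    rw [hWCker, hWFker]
    constructor
    · intro h
      have hker := congrArg LinearMap.ker h
      rw [hWFCker, hWFker] at hker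
      rw [← hker]
      exact le_sup_right
    · intro hker
      exact hWFC.ext_of_ker_eq hWF (by rw [hWFCker, hWFker, sup_eq_left.2 hker])
  rw [← Set.compl_iInter₂]
  constructor
  · rintro ⟨hconf, rfl⟩
    exact ⟨(Set.inter_eq_iff_diff_subset_compl hNF).1 hconf, hW.1 rfl⟩
  · rintro ⟨hobs, hker⟩
    obtain rfl := hW.2 hker
    exact ⟨(Set.inter_eq_iff_diff_subset_compl hNF).2 hobs, rfl⟩

/-- Characterisation of completions: with `WF = ∧F`, `WC = ∧C` and `WFC = ∧(F ∪ C)`,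
the set `F ∪ C` is a completion of `F` (it is confluent, i.e. `NF(F ∪ C) = NF(∧(F ∪ C))`,
and `∧(F ∪ C) = ∧F`) if and only if `obs(F) ⊆ ∪_{S ∈ C} Red(S)` and `∧F ⪯ ∧C`
(i.e. `ker WC ⊆ ker WF`). -/
theorem completion_characterisation (n : ℕ)
    (T : Fin n → (G →₀ K) →ₗ[K] (G →₀ K)) (hT : ∀ i, IsRedOp (T i))
    (C : Set ((G →₀ K) →ₗ[K] (G →₀ K))) (hC : ∀ S ∈ C, IsRedOp S)
    (WF WC WFC : (G →₀ K) →ₗ[K] (G →₀ K))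
    (hWF : IsRedOp WF) (hWC : IsRedOp WC) (hWFC : IsRedOp WFC)
    (hWFker : LinearMap.ker WF = ⨆ i, LinearMap.ker (T i))
    (hWCker : LinearMap.ker WC = ⨆ S ∈ C, LinearMap.ker S)
    (hWFCker : LinearMap.ker WFC =
      (⨆ i, LinearMap.ker (T i)) ⊔ ⨆ S ∈ C, LinearMap.ker S) :
    (((⋂ i, NFset (T i)) ∩ ⋂ S ∈ C, NFset S) = NFset WFC ∧ WFC = WF) ↔
      ((⋂ i, NFset (T i)) \ NFset WF ⊆ ⋃ S ∈ C, (NFset S)ᶜ ∧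
        LinearMap.ker WC ≤ LinearMap.ker WF) :=
  completion_characterisation_general n T hT C hC WF WC WFC hWF hWFC hWFker hWCker hWFCker
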